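/- arXiv:1511.02146 — 2 statements merged into one kernel-verified Lean document; each statement's English description precedes it below -/
import Mathlib

section
/- For every s ∈ ℂ with Re(s) > n/β, the integral ∫_{ℚ_p^n∖ℤ_p^n} A(ξ)^{−s} dⁿξ converges absolutely and equals ζ(s;A_β) = Σ_{m=1}^∞ p^{mn}(1−p^{−n}) A(p^m)^{−s}; moreover the function s ↦ ζ(s;A_β) is holomorphic on the half-plane {s ∈ ℂ : Re(s) > n/β}. -/
open MeasureTheory Filter Topology Metric

noncomputable instance qpnMeasurableSpace {p : ℕ} [Fact p.Prime] {n : ℕ} :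
    MeasurableSpace (Fin n → ℚ_[p]) := borel _

instance qpnBorelSpace {p : ℕ} [Fact p.Prime] {n : ℕ} :
    BorelSpace (Fin n → ℚ_[p]) := ⟨rfl⟩

/-!
`A(ξ)^{-s}` is constant on each sphere `‖ξ‖ = p^{m+1}`, so the integral over `‖ξ‖ > 1` is the
series `∑ μ(sphere) · A(p^{m+1})^{-s}`. A closed ball of radius `p^{m+1}` is the disjoint union of
`p^n` translates of the closed ball of radius `p^m` (one for each vector of `p`-adic digits), which
gives `μ(closedBall p^m) = p^{mn}` and `μ(sphere p^{m+1}) = p^{(m+1)n}(1 - p^{-n})`. The lower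
bound `A(ξ) ≥ C₀‖ξ‖^β` dominates the series by a geometric one of ratio `p^{n - β Re s}`, uniformly
on vertical strips inside `Re s > n/β`, which gives absolute convergence and holomorphy.
-/

open scoped ENNReal

section PiecewiseConstant

variable {α E ι : Type*} [MeasurableSpace α] [NormedAddCommGroup E] [Countable ι]
  {μ : Measure α} {s : ι → Set α} {f : α → E} {c : ι → E}

theorem integrableOn_iUnion_of_eqOn_const (hs : ∀ i, MeasurableSet (s i))
    (hμ : ∀ i, μ (s i) ≠ ∞) (hf : ∀ i, Set.EqOn f (fun _ => c i) (s i))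
    (hsum : Summable fun i => μ.real (s i) * ‖c i‖) : IntegrableOn f (⋃ i, s i) μ := by
  have hint (i : ι) : IntegrableOn f (s i) μ :=
    (integrableOn_const (hμ i)).congr_fun (hf i).symm (hs i)
  refine integrableOn_iUnion_of_summable_integral_norm hint (hsum.congr fun i => ?_)
  rw [setIntegral_congr_fun (hs i) fun x hx => congrArg norm (hf i hx), setIntegral_const,
    smul_eq_mul]

theorem integral_iUnion_of_eqOn_const [NormedSpace ℝ E] [CompleteSpace E]
    (hs : ∀ i, MeasurableSet (s i)) (hd : Pairwise (Function.onFun Disjoint s))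
    (hμ : ∀ i, μ (s i) ≠ ∞) (hf : ∀ i, Set.EqOn f (fun _ => c i) (s i))
    (hsum : Summable fun i => μ.real (s i) * ‖c i‖) :
    ∫ x in ⋃ i, s i, f x ∂μ = ∑' i, μ.real (s i) • c i := by
  rw [integral_iUnion hs hd (integrableOn_iUnion_of_eqOn_const hs hμ hf hsum)]
  exact tsum_congr fun i => by rw [setIntegral_congr_fun (hs i) (hf i), setIntegral_const]

end PiecewiseConstant

theorem PadicInt.norm_sub_val_lt_one_iff {p : ℕ} [Fact p.Prime] (z : ℤ_[p]) (k : ZMod p) :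
    ‖z - (k.val : ℤ_[p])‖ < 1 ↔ toZMod z = k := by
  rw [← mem_nonunits, ← IsLocalRing.mem_maximalIdeal, ← ker_toZMod, RingHom.mem_ker, map_sub,
    map_natCast, ZMod.natCast_zmod_val, sub_eq_zero]

namespace Padic

variable {p : ℕ} [Fact p.Prime]

theorem exists_padicInt_mul_eq {c x : ℚ_[p]} (hc : c ≠ 0) (hx : ‖x‖ ≤ ‖c‖) :
    ∃ z : ℤ_[p], (z : ℚ_[p]) * c = x :=
  ⟨⟨x / c, by rwa [norm_div, div_le_one (norm_pos_iff.mpr hc)]⟩, div_mul_cancel₀ x hc⟩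

theorem norm_mul_sub_val_mul_lt_iff {c : ℚ_[p]} (hc : c ≠ 0) (z : ℤ_[p]) (k : ZMod p) :
    ‖(z : ℚ_[p]) * c - k.val * c‖ < ‖c‖ ↔ PadicInt.toZMod z = k := by
  rw [← sub_mul, norm_mul, mul_lt_iff_lt_one_left (norm_pos_iff.mpr hc),
    ← PadicInt.norm_sub_val_lt_one_iff]
  norm_cast

theorem norm_inv_p_pow (m : ℕ) : ‖((p : ℚ_[p]) ^ m)⁻¹‖ = (p : ℝ) ^ m := by
  simp

variable {ι : Type*} [Fintype ι]

theorem closedBall_eq_iUnion_ball {c : ℚ_[p]} (hc : c ≠ 0) :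
    closedBall (0 : ι → ℚ_[p]) ‖c‖ =
      ⋃ v : ι → ZMod p, ball (fun i => ((v i).val : ℚ_[p]) * c) ‖c‖ := by
  have hc' : 0 < ‖c‖ := norm_pos_iff.mpr hc
  ext x
  simp only [Set.mem_iUnion, mem_ball_iff_norm, mem_closedBall_zero_iff]
  constructor
  · intro hx
    choose z hz using fun i => exists_padicInt_mul_eq hc ((norm_le_pi_norm x i).trans hx)
    refine ⟨fun i => PadicInt.toZMod (z i), (pi_norm_lt_iff hc').2 fun i => ?_⟩
    rw [Pi.sub_apply, ← hz i, norm_mul_sub_val_mul_lt_iff hc]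
  · rintro ⟨v, hv⟩
    have hcenter : ‖fun i => ((v i).val : ℚ_[p]) * c‖ ≤ ‖c‖ :=
      (pi_norm_le_iff_of_nonneg hc'.le).2 fun i => by
        rw [norm_mul]
        exact mul_le_of_le_one_left hc'.le (IsUltrametricDist.norm_natCast_le_one _ _)
    calc ‖x‖ = ‖(x - fun i => ((v i).val : ℚ_[p]) * c) + fun i => ((v i).val : ℚ_[p]) * c‖ := by
          rw [sub_add_cancel]
      _ ≤ ‖c‖ := (IsUltrametricDist.norm_add_le_max _ _).trans (max_le hv.le hcenter)

theorem pairwise_disjoint_ball_val_mul {c : ℚ_[p]} (hc : c ≠ 0) :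
    Pairwise (Function.onFun Disjoint fun v : ι → ZMod p =>
      ball (fun i => ((v i).val : ℚ_[p]) * c) ‖c‖) := by
  intro v w hvw
  refine Set.disjoint_left.2 fun x hxv hxw => hvw (funext fun i => ?_)
  have hdist :
      dist (fun i => ((v i).val : ℚ_[p]) * c) (fun i => ((w i).val : ℚ_[p]) * c) < ‖c‖ :=
    (IsUltrametricDist.dist_triangle_max _ x _).trans_lt (max_lt (by rwa [dist_comm]) hxw)
  have hi := (dist_le_pi_dist _ _ i).trans_lt hdist
  rwa [dist_eq_norm, ← PadicInt.coe_natCast, norm_mul_sub_val_mul_lt_iff hc, map_natCast,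
    ZMod.natCast_zmod_val] at hi

theorem exists_pi_norm_eq_pow [Nonempty ι] (m : ℕ) : ∃ x : ι → ℚ_[p], ‖x‖ = (p : ℝ) ^ m :=
  ⟨fun _ => ((p : ℚ_[p]) ^ m)⁻¹, by rw [pi_norm_const, norm_inv_p_pow]⟩

theorem pi_norm_lt_pow_succ_iff (x : ι → ℚ_[p]) (m : ℕ) :
    ‖x‖ < (p : ℝ) ^ (m + 1) ↔ ‖x‖ ≤ (p : ℝ) ^ m := by
  have hp : (0 : ℝ) < p := mod_cast (Fact.out : p.Prime).pos
  rw [pi_norm_lt_iff (by positivity), pi_norm_le_iff_of_nonneg (by positivity)]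
  refine forall_congr' fun i => ?_
  exact_mod_cast (norm_le_pow_iff_norm_lt_pow_add_one (x i) m).symm

theorem ball_pow_succ_eq_closedBall (m : ℕ) :
    ball (0 : ι → ℚ_[p]) ((p : ℝ) ^ (m + 1)) = closedBall 0 ((p : ℝ) ^ m) := by
  ext x
  simp only [mem_ball_zero_iff, mem_closedBall_zero_iff, pi_norm_lt_pow_succ_iff]

theorem setOf_one_lt_norm_eq_iUnion_sphere :
    {x : ι → ℚ_[p] | 1 < ‖x‖} = ⋃ m : ℕ, sphere 0 ((p : ℝ) ^ (m + 1)) := by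
  have hp : 1 < (p : ℝ) := mod_cast (Fact.out : p.Prime).one_lt
  ext x
  simp only [Set.mem_ofPred_eq, Set.mem_iUnion, mem_sphere_zero_iff_norm]
  constructor
  · intro hx
    obtain ⟨i, -⟩ : ∃ i, x i ≠ 0 := Function.ne_iff.mp (norm_pos_iff.mp (one_pos.trans hx))
    have : Nonempty ι := ⟨i⟩
    obtain ⟨j, hj : ‖x j‖ = ‖x‖⟩ := (IsGreatest.pi_norm x).1
    rw [← hj] at hx ⊢
    have hxj : x j ≠ 0 := norm_pos_iff.mp (one_pos.trans hx)
    rw [norm_eq_zpow_neg_valuation hxj] at hx ⊢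
    have hv : 0 < -(x j).valuation := (one_lt_zpow_iff_right₀ hp).mp hx
    refine ⟨(-(x j).valuation - 1).toNat, ?_⟩
    rw [← zpow_natCast]
    congr 1
    omega
  · rintro ⟨m, hm⟩
    exact hm ▸ one_lt_pow₀ hp m.succ_ne_zero

theorem pairwise_disjoint_sphere_pow_succ :
    Pairwise (Function.onFun Disjoint fun m : ℕ =>
      sphere (0 : ι → ℚ_[p]) ((p : ℝ) ^ (m + 1))) := by
  have hp : 1 < (p : ℝ) := mod_cast (Fact.out : p.Prime).one_lt
  intro i j hij
  refine Set.disjoint_left.2 fun x hi hj => hij ?_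
  rw [mem_sphere_zero_iff_norm] at hi hj
  simpa using (pow_right_injective₀ (by positivity) hp.ne') (hi.symm.trans hj)

variable [MeasurableSpace (ι → ℚ_[p])] [BorelSpace (ι → ℚ_[p])]
  (μ : Measure (ι → ℚ_[p])) [μ.IsAddHaarMeasure]

theorem measure_closedBall_eq_mul_measure_ball {c : ℚ_[p]} (hc : c ≠ 0) :
    μ (closedBall 0 ‖c‖) = (p : ℝ≥0∞) ^ Fintype.card ι * μ (ball 0 ‖c‖) := by
  classical
  rw [closedBall_eq_iUnion_ball hc, measure_iUnion (pairwise_disjoint_ball_val_mul hc)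
    (fun _ => measurableSet_ball), tsum_fintype]
  simp [Measure.addHaar_ball_center]

theorem measure_closedBall_pow_succ (m : ℕ) :
    μ (closedBall 0 ((p : ℝ) ^ (m + 1))) =
      (p : ℝ≥0∞) ^ Fintype.card ι * μ (closedBall 0 ((p : ℝ) ^ m)) := by
  have hc : ((p : ℚ_[p]) ^ (m + 1))⁻¹ ≠ 0 := by simp [(Fact.out : p.Prime).ne_zero]
  rw [← ball_pow_succ_eq_closedBall m, ← norm_inv_p_pow (m + 1),
    measure_closedBall_eq_mul_measure_ball μ hc]

theorem measure_closedBall_pow (hμ : μ (closedBall 0 1) = 1) (m : ℕ) :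
    μ (closedBall 0 ((p : ℝ) ^ m)) = (p : ℝ≥0∞) ^ (m * Fintype.card ι) := by
  induction m with
  | zero => simpa using hμ
  | succ m ih => rw [measure_closedBall_pow_succ, ih, ← pow_add]; ring_nf

theorem measureReal_sphere_pow_succ (hμ : μ (closedBall 0 1) = 1) (m : ℕ) :
    μ.real (sphere 0 ((p : ℝ) ^ (m + 1))) =
      (p : ℝ) ^ ((m + 1) * Fintype.card ι) * (1 - (p : ℝ) ^ (-(Fintype.card ι : ℤ))) := by
  have hp : (p : ℝ) ≠ 0 := mod_cast (Fact.out : p.Prime).ne_zero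
  rw [← closedBall_sdiff_ball, measureReal_sdiff ball_subset_closedBall measurableSet_ball
      (by rw [measure_closedBall_pow μ hμ]; finiteness), ball_pow_succ_eq_closedBall,
    measureReal_def, measureReal_def, measure_closedBall_pow μ hμ, measure_closedBall_pow μ hμ]
  simp only [ENNReal.toReal_pow, ENNReal.toReal_natCast, zpow_neg, zpow_natCast]
  field_simp
  ring

theorem integrableOn_and_integral_setOf_one_lt_norm_of_eqOn_sphere {E : Type*}
    [NormedAddCommGroup E] [NormedSpace ℝ E] [CompleteSpace E] {f : (ι → ℚ_[p]) → E}
    {c : ℕ → E} (hf : ∀ m, Set.EqOn f (fun _ => c m) (sphere 0 ((p : ℝ) ^ (m + 1))))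
    (hsum : Summable fun m => μ.real (sphere 0 ((p : ℝ) ^ (m + 1))) * ‖c m‖) :
    IntegrableOn f {x | 1 < ‖x‖} μ ∧
      ∫ x in {x | 1 < ‖x‖}, f x ∂μ = ∑' m, μ.real (sphere 0 ((p : ℝ) ^ (m + 1))) • c m := by
  have hs (m : ℕ) : MeasurableSet (sphere (0 : ι → ℚ_[p]) ((p : ℝ) ^ (m + 1))) :=
    isClosed_sphere.measurableSet
  have hμ (m : ℕ) : μ (sphere 0 ((p : ℝ) ^ (m + 1))) ≠ ∞ := (isCompact_sphere _ _).measure_ne_top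
  rw [setOf_one_lt_norm_eq_iUnion_sphere]
  exact ⟨integrableOn_iUnion_of_eqOn_const hs hμ hf hsum,
    integral_iUnion_of_eqOn_const hs pairwise_disjoint_sphere_pow_succ hμ hf hsum⟩

end Padic

theorem Real.rpow_le_rpow_add_rpow {x y a b : ℝ} (hx : 0 < x) (ha : a ≤ y) (hb : y ≤ b) :
    x ^ y ≤ x ^ a + x ^ b := by
  rcases le_total x 1 with h | h
  · exact (Real.rpow_le_rpow_of_exponent_ge hx h ha).trans
      (le_add_of_nonneg_right (Real.rpow_nonneg hx.le _))
  · exact (Real.rpow_le_rpow_of_exponent_le h hb).trans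
      (le_add_of_nonneg_left (Real.rpow_nonneg hx.le _))

theorem summable_pow_mul_rpow_neg {r C β σ : ℝ} {n : ℕ} {w : ℕ → ℝ} (hr : 1 < r) (hC : 0 < C)
    (hβ : 0 < β) (hσ : n / β < σ) (hw : ∀ m, C * (r ^ (m + 1)) ^ β ≤ w m) :
    Summable fun m => r ^ ((m + 1) * n) * w m ^ (-σ) := by
  have hr0 : 0 < r := one_pos.trans hr
  have hσ0 : 0 ≤ σ := (div_nonneg n.cast_nonneg hβ.le).trans hσ.le
  have hq : r ^ ((n : ℝ) - β * σ) < 1 :=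
    Real.rpow_lt_one_of_one_lt_of_neg hr (by rw [div_lt_iff₀ hβ] at hσ; linarith)
  have hgeom : Summable fun m : ℕ => C ^ (-σ) * (r ^ ((n : ℝ) - β * σ)) ^ (m + 1) :=
    ((summable_nat_add_iff 1).mpr (summable_geometric_of_lt_one (by positivity) hq)).mul_left _
  have hw0 (m : ℕ) : 0 < w m := (by positivity : 0 < C * (r ^ (m + 1)) ^ β).trans_le (hw m)
  refine hgeom.of_nonneg_of_le (fun m => by have := hw0 m; positivity) fun m => ?_
  calc r ^ ((m + 1) * n) * w m ^ (-σ)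
      ≤ r ^ ((m + 1) * n) * (C * (r ^ (m + 1)) ^ β) ^ (-σ) :=
        mul_le_mul_of_nonneg_left
          (Real.rpow_le_rpow_of_nonpos (by positivity) (hw m) (neg_nonpos.mpr hσ0))
          (by positivity)
    _ = C ^ (-σ) * (r ^ ((n : ℝ) - β * σ)) ^ (m + 1) := by
        rw [Real.mul_rpow hC.le (by positivity), ← Real.rpow_natCast r (m + 1),
          ← Real.rpow_mul hr0.le, ← Real.rpow_mul hr0.le, ← Real.rpow_natCast r ((m + 1) * n),
          ← Real.rpow_natCast (r ^ _) (m + 1), ← Real.rpow_mul hr0.le, mul_left_comm,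
          ← Real.rpow_add hr0]
        congr 2
        push_cast
        ring

theorem differentiableOn_tsum_mul_cpow_neg {c : ℕ → ℂ} {w : ℕ → ℝ} (hw : ∀ m, 0 < w m)
    {σ₀ : ℝ} (hsum : ∀ σ, σ₀ < σ → Summable fun m => ‖c m‖ * w m ^ (-σ)) :
    DifferentiableOn ℂ (fun s : ℂ => ∑' m, c m * (w m : ℂ) ^ (-s)) {s : ℂ | σ₀ < s.re} := by
  intro s₀ hs₀
  obtain ⟨a, hσ₀a, has₀⟩ := exists_between (α := ℝ) hs₀
  set U := {s : ℂ | a < s.re ∧ s.re < s₀.re + 1}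
  have hU : IsOpen U := (isOpen_lt continuous_const Complex.continuous_re).inter
    (isOpen_lt Complex.continuous_re continuous_const)
  have hdiff : DifferentiableOn ℂ (fun s : ℂ => ∑' m, c m * (w m : ℂ) ^ (-s)) U := by
    refine Complex.differentiableOn_tsum_of_summable_norm
      ((hsum (s₀.re + 1) (by linarith)).add (hsum a hσ₀a))
      (fun m => ((differentiable_id.neg.const_cpow
        (Or.inl (Complex.ofReal_ne_zero.mpr (hw m).ne'))).const_mul _).differentiableOn)
      hU fun m s hs => ?_
    rw [norm_mul, Complex.norm_cpow_eq_rpow_re_of_pos (hw m), Complex.neg_re, ← mul_add]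
    exact mul_le_mul_of_nonneg_left
      (Real.rpow_le_rpow_add_rpow (hw m) (neg_le_neg hs.2.le) (neg_le_neg hs.1.le))
      (norm_nonneg _)
  exact (hdiff.differentiableAt (hU.mem_nhds ⟨has₀, lt_add_one _⟩)).differentiableWithinAt

theorem spectral_zeta_integral_formula_and_holomorphy_general {p n : ℕ} [Fact p.Prime] (hn : 0 < n)
    (μ : Measure (Fin n → ℚ_[p])) [μ.IsAddHaarMeasure]
    (hμ : μ (closedBall (0 : Fin n → ℚ_[p]) 1) = 1)
    (β C₀ : ℝ) (hβ : 0 < β) (hC₀ : 0 < C₀)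
    (A : (Fin n → ℚ_[p]) → ℝ) (g : ℝ → ℝ)
    (hrad : ∀ ξ : Fin n → ℚ_[p], A ξ = g ‖ξ‖)
    (hlow : ∀ ξ : Fin n → ℚ_[p], C₀ * ‖ξ‖ ^ β ≤ A ξ) :
    (∀ s : ℂ, (n : ℝ) / β < s.re →
      IntegrableOn (fun ξ => (A ξ : ℂ) ^ (-s)) {ξ : Fin n → ℚ_[p] | 1 < ‖ξ‖} μ ∧
      (∫ ξ in {ξ : Fin n → ℚ_[p] | 1 < ‖ξ‖}, (A ξ : ℂ) ^ (-s) ∂μ) =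
        ∑' m : ℕ, (p : ℂ) ^ ((m + 1) * n) * (1 - (p : ℂ) ^ (-(n : ℤ))) *
          (g ((p : ℝ) ^ (m + 1)) : ℂ) ^ (-s)) ∧
    DifferentiableOn ℂ
      (fun s : ℂ => ∑' m : ℕ, (p : ℂ) ^ ((m + 1) * n) * (1 - (p : ℂ) ^ (-(n : ℤ))) *
        (g ((p : ℝ) ^ (m + 1)) : ℂ) ^ (-s))
      {s : ℂ | (n : ℝ) / β < s.re} := by
  have : Nonempty (Fin n) := Fin.pos_iff_nonempty.mp hn
  have hp : (1 : ℝ) < p := mod_cast (Fact.out : p.Prime).one_lt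
  set S : ℕ → Set (Fin n → ℚ_[p]) := fun m => sphere 0 ((p : ℝ) ^ (m + 1))
  have hg_lower (m : ℕ) : C₀ * ((p : ℝ) ^ (m + 1)) ^ β ≤ g ((p : ℝ) ^ (m + 1)) := by
    obtain ⟨ξ, hξ⟩ := Padic.exists_pi_norm_eq_pow (ι := Fin n) (p := p) (m + 1)
    simpa only [hrad, hξ] using hlow ξ
  have hg_pos (m : ℕ) : 0 < g ((p : ℝ) ^ (m + 1)) :=
    (mul_pos hC₀ (Real.rpow_pos_of_pos (pow_pos (one_pos.trans hp) _) _)).trans_le (hg_lower m)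
  have hS (m : ℕ) :
      (μ.real (S m) : ℂ) = (p : ℂ) ^ ((m + 1) * n) * (1 - (p : ℂ) ^ (-(n : ℤ))) := by
    simp only [S, Padic.measureReal_sphere_pow_succ μ hμ, Fintype.card_fin]
    push_cast
    rfl
  have hsum (σ : ℝ) (hσ : n / β < σ) :
      Summable fun m => μ.real (S m) * g ((p : ℝ) ^ (m + 1)) ^ (-σ) := by
    simp only [S, Padic.measureReal_sphere_pow_succ μ hμ, Fintype.card_fin,
      mul_right_comm _ (1 - _ : ℝ)]
    exact (summable_pow_mul_rpow_neg hp hC₀ hβ hσ hg_lower).mul_right _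
  refine ⟨fun s hs => ?_, ?_⟩
  · obtain ⟨hint, heq⟩ := Padic.integrableOn_and_integral_setOf_one_lt_norm_of_eqOn_sphere μ
      (f := fun ξ => (A ξ : ℂ) ^ (-s)) (c := fun m => (g ((p : ℝ) ^ (m + 1)) : ℂ) ^ (-s))
      (fun m ξ hξ => by simp only [hrad, mem_sphere_zero_iff_norm.mp hξ])
      (by simpa only [Complex.norm_cpow_eq_rpow_re_of_pos (hg_pos _), Complex.neg_re]
        using hsum s.re hs)
    exact ⟨hint, heq.trans (tsum_congr fun m => by rw [Complex.real_smul, hS])⟩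
  · simp only [← hS]
    exact differentiableOn_tsum_mul_cpow_neg hg_pos fun σ hσ => by
      simpa only [Complex.norm_real, Real.norm_of_nonneg measureReal_nonneg] using hsum σ hσ

/-- For `Re(s) > n/β` the integral `∫_{ℚ_p^n∖ℤ_p^n} A(ξ)^{−s} dⁿξ` converges
absolutely and equals `ζ(s;A_β) = Σ_{m=1}^∞ p^{mn}(1−p^{−n}) A(p^m)^{−s}`; moreover the spectral
zeta function is holomorphic on the half-plane `Re(s) > n/β`. -/
theorem spectral_zeta_integral_formula_and_holomorphy {p n : ℕ} [Fact p.Prime] (hn : 0 < n)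
    (μ : Measure (Fin n → ℚ_[p])) [μ.IsAddHaarMeasure]
    (hμ : μ (closedBall (0 : Fin n → ℚ_[p]) 1) = 1)
    (β C₀ C₁ : ℝ) (hβ : 0 < β) (hC₀ : 0 < C₀) (hC₁ : 0 < C₁)
    (A : (Fin n → ℚ_[p]) → ℝ) (g : ℝ → ℝ)
    (hrad : ∀ ξ : Fin n → ℚ_[p], A ξ = g ‖ξ‖)
    (hlow : ∀ ξ : Fin n → ℚ_[p], C₀ * ‖ξ‖ ^ β ≤ A ξ)
    (hupp : ∀ ξ : Fin n → ℚ_[p], A ξ ≤ C₁ * ‖ξ‖ ^ β) :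
    (∀ s : ℂ, (n : ℝ) / β < s.re →
      IntegrableOn (fun ξ => (A ξ : ℂ) ^ (-s)) {ξ : Fin n → ℚ_[p] | 1 < ‖ξ‖} μ ∧
      (∫ ξ in {ξ : Fin n → ℚ_[p] | 1 < ‖ξ‖}, (A ξ : ℂ) ^ (-s) ∂μ) =
        ∑' m : ℕ, (p : ℂ) ^ ((m + 1) * n) * (1 - (p : ℂ) ^ (-(n : ℤ))) *
          (g ((p : ℝ) ^ (m + 1)) : ℂ) ^ (-s)) ∧
    DifferentiableOn ℂ
      (fun s : ℂ => ∑' m : ℕ, (p : ℂ) ^ ((m + 1) * n) * (1 - (p : ℂ) ^ (-(n : ℤ))) *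
        (g ((p : ℝ) ^ (m + 1)) : ℂ) ^ (-s))
      {s : ℂ | (n : ℝ) / β < s.re} :=
  spectral_zeta_integral_formula_and_holomorphy_general hn μ hμ β C₀ hβ hC₀ A g hrad hlow
end

section
/- Let f ∈ L²₀(ℤ_p^n) (so f ∈ L¹(ℚ_p^n), being square-integrable with support in the unit ball) and let f̂(ξ) = ∫_{ℚ_p^n} ψ(ξ·x) f(x) dⁿx be its Fourier transform. Then for every t > 0 the Fourier transform of K(·,t) ∗ f equals 1_{ℚ_p^n∖ℤ_p^n}(ξ) e^{−t A(ξ)} f̂(ξ) for all ξ ∈ ℚ_p^n, this function lies in L¹(ℚ_p^n), and (T(t)f)(x) = ∫_{ℚ_p^n} ψ(−ξ·x) 1_{ℚ_p^n∖ℤ_p^n}(ξ) e^{−t A(ξ)} f̂(ξ) dⁿξ for almost every x. -/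
open MeasureTheory Filter Topology Metric

namespace PadicHeat

variable {p : ℕ} [Fact p.Prime] {n : ℕ}

/-- The pairing `ξ·x = Σ_j ξ_j x_j` on `ℚ_p^n`. -/
noncomputable def dotQ (ξ x : Fin n → ℚ_[p]) : ℚ_[p] := ∑ j, ξ j * x j

/-- The heat kernel `K(x,t) = ∫_{ℚ_p^n∖ℤ_p^n} ψ(−x·ξ) e^{−tA(ξ)} dⁿξ`. -/
noncomputable def heatK (μ : Measure (Fin n → ℚ_[p])) (ψ : ℚ_[p] → ℂ)
    (A : (Fin n → ℚ_[p]) → ℝ) (t : ℝ) (x : Fin n → ℚ_[p]) : ℂ :=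
  ∫ ξ in {ξ : Fin n → ℚ_[p] | 1 < ‖ξ‖}, ψ (-dotQ x ξ) * (Real.exp (-(t * A ξ)) : ℂ) ∂μ

open Classical in
/-- The semigroup `T(t)`: the identity for `t = 0` and convolution with `K(·,t)` for `t ≠ 0`. -/
noncomputable def heatT (μ : Measure (Fin n → ℚ_[p])) (ψ : ℚ_[p] → ℂ)
    (A : (Fin n → ℚ_[p]) → ℝ) (t : ℝ) (f : (Fin n → ℚ_[p]) → ℂ)
    (x : Fin n → ℚ_[p]) : ℂ :=
  if t = 0 then f x else ∫ y, heatK μ ψ A t y * f (x - y) ∂μ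

/-- The `p`-adic Fourier transform `f̂(ξ) = ∫ ψ(ξ·x) f(x) dⁿx`. -/
noncomputable def fourierQ (μ : Measure (Fin n → ℚ_[p])) (ψ : ℚ_[p] → ℂ)
    (f : (Fin n → ℚ_[p]) → ℂ) (ξ : Fin n → ℚ_[p]) : ℂ :=
  ∫ x, ψ (dotQ ξ x) * f x ∂μ

/-- The pseudodifferential operator `A_β`, `(A_β f)(x) = ∫ ψ(−ξ·x) A(ξ) f̂(ξ) dⁿξ`. -/
noncomputable def opA (μ : Measure (Fin n → ℚ_[p])) (ψ : ℚ_[p] → ℂ)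
    (A : (Fin n → ℚ_[p]) → ℝ) (f : (Fin n → ℚ_[p]) → ℂ) (x : Fin n → ℚ_[p]) : ℂ :=
  ∫ ξ, ψ (-dotQ ξ x) * (A ξ : ℂ) * fourierQ μ ψ f ξ ∂μ

/-- Membership in the Lizorkin space `𝓛₀(ℤ_p^n)`: locally constant, supported in the unit
ball, with zero mean. -/
def MemL0 (μ : Measure (Fin n → ℚ_[p])) (f : (Fin n → ℚ_[p]) → ℂ) : Prop :=
  IsLocallyConstant f ∧ (∀ x : Fin n → ℚ_[p], 1 < ‖x‖ → f x = 0) ∧ (∫ x, f x ∂μ) = 0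

/-- Membership in `L²₀(ℤ_p^n)`: square integrable, vanishing (a.e.) outside the unit ball,
with zero mean. -/
def MemL20 (μ : Measure (Fin n → ℚ_[p])) (f : (Fin n → ℚ_[p]) → ℂ) : Prop :=
  MemLp f 2 μ ∧ (∀ᵐ x ∂μ, 1 < ‖x‖ → f x = 0) ∧ (∫ x, f x ∂μ) = 0

/-- The wavelet `ω_{γbk}(x) = p^{−nγ/2} ψ(p^{−1} k·(p^γ x − b)) Ω(‖p^γ x − b‖_p)`. -/
noncomputable def omegaFn (ψ : ℚ_[p] → ℂ) (γ : ℤ) (b : Fin n → ℚ_[p]) (k : Fin n → ℕ)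
    (x : Fin n → ℚ_[p]) : ℂ :=
  ((p : ℝ) ^ (-((n : ℝ) * (γ : ℝ)) / 2) : ℝ) *
    ψ ((p : ℚ_[p])⁻¹ * ∑ j, (k j : ℚ_[p]) * ((p : ℚ_[p]) ^ γ * x j - b j)) *
    (if ‖(fun j => (p : ℚ_[p]) ^ γ * x j - b j : Fin n → ℚ_[p])‖ ≤ 1 then 1 else 0)

end PadicHeat

/-! The heat kernel `K(·,t)` is the inverse Fourier transform of the symbol
`m = 1_{‖ξ‖>1} e^{−tA(ξ)}`. Since `A` is radial and the norm is ultrametric, `m` is invariant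
under translation by `ℤ_p^n`; averaging a character over `ℤ_p^n` then shows that `K(·,t)` vanishes
off `ℤ_p^n`, and Fubini together with `∫_{ℤ_p^n} ψ(ζ·y) dy = 1_{‖ζ‖≤1}` gives `K̂(·,t) = m`.
The symbol is integrable because `A(ξ) ≥ C₀‖ξ‖^β` while the Haar measure of the sphere
`‖ξ‖ = p^k` grows only geometrically in `k`. The Fourier transform turns `K ∗ f` into `m f̂`,
and the inversion formula for `T(t)f` is Fubini once more. -/

theorem IsUltrametricDist.norm_add_eq_right_of_norm_lt {E : Type*} [SeminormedAddGroup E]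
    [IsUltrametricDist E] {e x : E} (h : ‖e‖ < ‖x‖) : ‖e + x‖ = ‖x‖ := by
  rw [norm_add_eq_max_of_norm_ne_norm h.ne, max_eq_right h.le]

theorem IsUltrametricDist.preimage_add_closedBall_zero {E : Type*} [SeminormedAddCommGroup E]
    [IsUltrametricDist E] {e : E} {r : ℝ} (he : ‖e‖ ≤ r) :
    (e + ·) ⁻¹' closedBall 0 r = closedBall 0 r := by
  rw [preimage_add_closedBall, zero_sub, eq_comm]
  exact closedBall_eq_of_mem (by simpa using he)

theorem Measurable.comp_of_countable_range {X Y Z : Type*} [MeasurableSpace X]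
    [MeasurableSpace Y] [MeasurableSingletonClass Y] [MeasurableSpace Z] {h : X → Y}
    (hh : Measurable h) (hc : (Set.range h).Countable) (g : Y → Z) : Measurable (g ∘ h) := by
  have := hc.to_subtype
  exact (measurable_of_countable (g ∘ Subtype.val)).comp (hh.subtype_mk (h := Set.mem_range_self))

theorem Real.summable_exp_neg_mul_pow_mul_pow {c q : ℝ} (hc : 0 < c) (hq : 1 < q) (K : ℝ) :
    Summable fun m : ℕ => Real.exp (-(c * q ^ m)) * K ^ m := by
  have hstep : ∀ m : ℕ, Real.exp (-(c * q ^ (m + 1))) * K ^ (m + 1)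
      = Real.exp (-(c * q ^ m)) * K ^ m * (K * Real.exp (-(c * (q - 1) * q ^ m))) := fun m => by
    rw [show -(c * q ^ (m + 1)) = -(c * q ^ m) + -(c * (q - 1) * q ^ m) by ring, Real.exp_add]
    ring
  have hratio : Tendsto (fun m : ℕ => K * Real.exp (-(c * (q - 1) * q ^ m))) atTop (𝓝 0) := by
    have h := (tendsto_pow_atTop_atTop_of_one_lt hq).const_mul_atTop (mul_pos hc (sub_pos.2 hq))
    simpa using (Real.tendsto_exp_atBot.comp (tendsto_neg_atTop_atBot.comp h)).const_mul K
  refine summable_of_ratio_norm_eventually_le (r := 1 / 2) (by norm_num) ?_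
  filter_upwards [hratio.norm.eventually_le_const (by norm_num : ‖(0 : ℝ)‖ < 1 / 2)] with m hm
  rw [hstep, norm_mul, mul_comm (1 / 2 : ℝ)]
  exact mul_le_mul_of_nonneg_left hm (norm_nonneg _)

/-- Cover the ball of radius `‖c‖` by finitely many unit balls, and rescale by powers of `c`. -/
theorem MeasureTheory.Measure.exists_measureReal_closedBall_pow_le {𝕜 E : Type*}
    [NontriviallyNormedField 𝕜] [NormedAddCommGroup E] [NormedSpace 𝕜 E] [ProperSpace E]
    [MeasurableSpace E] [BorelSpace E] (μ : Measure E) [μ.IsAddHaarMeasure] {c : 𝕜}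
    (hc : 1 < ‖c‖) :
    ∃ N : ℕ, ∀ m : ℕ, μ.real (closedBall 0 (‖c‖ ^ m)) ≤ N ^ m * μ.real (closedBall 0 1) := by
  obtain ⟨t, -, ht, hcover⟩ :=
    finite_cover_balls_of_compact (isCompact_closedBall (0 : E) ‖c‖) zero_lt_one
  have hc0 : c ≠ 0 := norm_pos_iff.1 (zero_lt_one.trans hc)
  refine ⟨ht.toFinset.card, fun m => ?_⟩
  induction m with
  | zero => simp
  | succ m ih =>
    have hsub : closedBall (0 : E) (‖c‖ ^ (m + 1))
        ⊆ ⋃ v ∈ ht.toFinset, closedBall (c ^ m • v) (‖c‖ ^ m) := by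
      intro x hx
      have hy : (c ^ m)⁻¹ • x ∈ closedBall (0 : E) ‖c‖ := by
        rw [mem_closedBall_zero_iff, norm_smul, norm_inv, norm_pow,
          inv_mul_le_iff₀ (by positivity), ← pow_succ]
        exact mem_closedBall_zero_iff.1 hx
      obtain ⟨v, hv, hyv⟩ := Set.mem_iUnion₂.1 (hcover hy)
      refine Set.mem_biUnion (ht.mem_toFinset.2 hv) ?_
      rw [mem_closedBall, dist_eq_norm, ← smul_inv_smul₀ (pow_ne_zero m hc0) x, ← smul_sub,
        norm_smul, norm_pow]
      exact mul_le_of_le_one_right (by positivity) (mem_ball_iff_norm.1 hyv).le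
    calc μ.real (closedBall 0 (‖c‖ ^ (m + 1)))
        ≤ ∑ v ∈ ht.toFinset, μ.real (closedBall (c ^ m • v) (‖c‖ ^ m)) :=
          (measureReal_mono hsub (measure_biUnion_lt_top ht.toFinset.finite_toSet
            fun _ _ => measure_closedBall_lt_top).ne).trans (measureReal_biUnion_finset_le _ _)
      _ = ht.toFinset.card * μ.real (closedBall 0 (‖c‖ ^ m)) := by
          simp [measureReal_def, addHaar_closedBall_center]
      _ ≤ _ := by
          rw [pow_succ', mul_assoc]
          gcongr

theorem MeasureTheory.setIntegral_eq_zero_of_add_left_eq_mul {G : Type*} [AddGroup G]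
    [MeasurableSpace G] [MeasurableAdd G] (μ : Measure G) [μ.IsAddLeftInvariant] {U : Set G}
    (hU : MeasurableSet U) {e : G} (hUe : (e + ·) ⁻¹' U = U) {h : G → ℂ} {c : ℂ} (hc : c ≠ 1)
    (hh : ∀ y ∈ U, h (e + y) = c * h y) : ∫ y in U, h y ∂μ = 0 := by
  have htrans := (measurePreserving_add_left μ e).setIntegral_preimage_emb
    (MeasurableEquiv.addLeft e).measurableEmbedding h U
  rw [hUe, setIntegral_congr_fun hU hh, integral_const_mul] at htrans
  by_contra hne
  exact hc ((mul_eq_right₀ hne).1 htrans)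

namespace PadicHeat

variable {p : ℕ} [Fact p.Prime] {n : ℕ}

theorem dotQ_eq_dotProduct (ξ x : Fin n → ℚ_[p]) : dotQ ξ x = ξ ⬝ᵥ x := rfl

theorem continuous_dotQ :
    Continuous fun z : (Fin n → ℚ_[p]) × (Fin n → ℚ_[p]) => dotQ z.1 z.2 :=
  continuous_fst.dotProduct continuous_snd

theorem norm_dotQ_le_one {ξ x : Fin n → ℚ_[p]} (hξ : ‖ξ‖ ≤ 1) (hx : ‖x‖ ≤ 1) :
    ‖dotQ ξ x‖ ≤ 1 :=
  IsUltrametricDist.norm_sum_le_of_forall_le_of_nonneg zero_le_one fun j _ => by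
    rw [norm_mul]
    exact mul_le_one₀ ((norm_le_pi_norm ξ j).trans hξ) (norm_nonneg _)
      ((norm_le_pi_norm x j).trans hx)

theorem exists_norm_eq_zpow {x : Fin n → ℚ_[p]} (hx : x ≠ 0) :
    ∃ k : ℤ, ‖x‖ = (p : ℝ) ^ k := by
  have : Nonempty (Fin n) := by
    by_contra h
    exact hx (funext fun j => (not_nonempty_iff.1 h).elim j)
  obtain ⟨j, -, hj⟩ := Finset.univ.exists_mem_eq_sup Finset.univ_nonempty fun j => ‖x j‖₊
  have hxj : ‖x‖ = ‖x j‖ := congrArg NNReal.toReal ((Pi.nnnorm_def x).trans hj)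
  have hj0 : x j ≠ 0 := fun h => hx (norm_eq_zero.1 (by rw [hxj, h, norm_zero]))
  exact ⟨_, hxj.trans (Padic.norm_eq_zpow_neg_valuation hj0)⟩

theorem exists_norm_eq_pow_of_one_lt {x : Fin n → ℚ_[p]} (hx : 1 < ‖x‖) :
    ∃ m : ℕ, ‖x‖ = (p : ℝ) ^ m := by
  obtain ⟨k, hk⟩ := exists_norm_eq_zpow (norm_pos_iff.1 (zero_lt_one.trans hx))
  have hk0 : 0 < k :=
    (one_lt_zpow_iff_right₀ (by exact_mod_cast (Fact.out : p.Prime).one_lt)).1 (hk ▸ hx)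
  exact ⟨k.toNat, by rw [hk, ← zpow_natCast, Int.toNat_of_nonneg hk0.le]⟩

theorem measurable_comp_norm (g : ℝ → ℝ) : Measurable fun x : Fin n → ℚ_[p] => g ‖x‖ := by
  refine continuous_norm.measurable.comp_of_countable_range
    (((Set.countable_range fun k : ℤ => (p : ℝ) ^ k).insert 0).mono ?_) g
  rintro _ ⟨x, rfl⟩
  rcases eq_or_ne x 0 with rfl | hx
  · exact Or.inl norm_zero
  · exact Or.inr ((exists_norm_eq_zpow hx).imp fun _ h => h.symm)

theorem exists_measureReal_sphere_pow_le (μ : Measure (Fin n → ℚ_[p])) [μ.IsAddHaarMeasure] :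
    ∃ N : ℕ, ∀ m : ℕ,
      μ.real (sphere (0 : Fin n → ℚ_[p]) ((p : ℝ) ^ m)) ≤ N ^ m * μ.real (closedBall 0 1) := by
  have hpinv : ‖(p : ℚ_[p])⁻¹‖ = p := by rw [norm_inv, Padic.norm_p, inv_inv]
  obtain ⟨N, hN⟩ := Measure.exists_measureReal_closedBall_pow_le μ
    (hpinv ▸ (by exact_mod_cast (Fact.out : p.Prime).one_lt : (1 : ℝ) < p))
  refine ⟨N, fun m => (measureReal_mono sphere_subset_closedBall
    measure_closedBall_lt_top.ne).trans ?_⟩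
  simpa only [hpinv] using hN m

theorem exists_norm_le_one_char_dotQ_ne_one {ψ : ℚ_[p] → ℂ}
    (hψnontriv : ∃ a : ℚ_[p], ‖a‖ ≤ p ∧ ψ a ≠ 1) {x : Fin n → ℚ_[p]} (hx : 1 < ‖x‖) :
    ∃ e : Fin n → ℚ_[p], ‖e‖ ≤ 1 ∧ ψ (dotQ x e) ≠ 1 := by
  classical
  obtain ⟨a, ha, hψa⟩ := hψnontriv
  obtain ⟨j, hj⟩ : ∃ j, 1 < ‖x j‖ := by
    by_contra! h
    exact hx.not_ge ((pi_norm_le_iff_of_nonneg zero_le_one).2 h)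
  -- the norm of `ℚ_[p]` takes no value strictly between `1` and `p`
  have hpj : (p : ℝ) ≤ ‖x j‖ := by
    simpa using (Padic.norm_le_pow_iff_norm_lt_pow_add_one (x j) 0).not.1 hj.not_ge
  refine ⟨Pi.single j (a / x j), ?_, ?_⟩
  · rw [Pi.norm_single, norm_div]
    exact div_le_one_of_le₀ (ha.trans hpj) (norm_nonneg _)
  · rwa [dotQ_eq_dotProduct, dotProduct_single,
      mul_div_cancel₀ _ (norm_pos_iff.1 (zero_lt_one.trans hj))]

theorem setIntegral_closedBall_char_dotQ (μ : Measure (Fin n → ℚ_[p])) [μ.IsAddHaarMeasure]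
    (hμ : μ (closedBall (0 : Fin n → ℚ_[p]) 1) = 1) {ψ : ℚ_[p] → ℂ}
    (hψadd : ∀ a b : ℚ_[p], ψ (a + b) = ψ a * ψ b)
    (hψtriv : ∀ a : ℚ_[p], ‖a‖ ≤ 1 → ψ a = 1)
    (hψnontriv : ∃ a : ℚ_[p], ‖a‖ ≤ p ∧ ψ a ≠ 1) (ζ : Fin n → ℚ_[p]) :
    ∫ y in closedBall 0 1, ψ (dotQ ζ y) ∂μ = if ‖ζ‖ ≤ 1 then 1 else 0 := by
  split_ifs with hζ
  · rw [setIntegral_congr_fun measurableSet_closedBall fun y hy =>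
      hψtriv _ (norm_dotQ_le_one hζ (mem_closedBall_zero_iff.1 hy))]
    simp [measureReal_def, hμ]
  · obtain ⟨e, he, hψe⟩ := exists_norm_le_one_char_dotQ_ne_one hψnontriv (not_le.1 hζ)
    refine setIntegral_eq_zero_of_add_left_eq_mul μ measurableSet_closedBall
      (IsUltrametricDist.preimage_add_closedBall_zero he) hψe fun y _ => ?_
    rw [dotQ_eq_dotProduct, dotProduct_add, hψadd]
    rfl

theorem integrable_char_mul {X : Type*} [TopologicalSpace X] [MeasurableSpace X]
    [OpensMeasurableSpace X] {ν : Measure X} {ψ : ℚ_[p] → ℂ} (hψcont : Continuous ψ)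
    (hψnorm : ∀ a : ℚ_[p], ‖ψ a‖ = 1) {φ : X → ℚ_[p]} (hφ : Continuous φ) {g : X → ℂ}
    (hg : Integrable g ν) : Integrable (fun z => ψ (φ z) * g z) ν :=
  hg.bdd_mul (hψcont.comp hφ).aestronglyMeasurable (ae_of_all _ fun _ => (hψnorm _).le)

section Fourier

variable (μ : Measure (Fin n → ℚ_[p])) {ψ : ℚ_[p] → ℂ}

theorem aestronglyMeasurable_fourierQ [SFinite μ] (hψcont : Continuous ψ)
    {f : (Fin n → ℚ_[p]) → ℂ} (hf : AEStronglyMeasurable f μ) :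
    AEStronglyMeasurable (fourierQ μ ψ f) μ :=
  ((hψcont.comp continuous_dotQ).aestronglyMeasurable.mul hf.comp_snd).integral_prod_right'

theorem norm_fourierQ_le (hψnorm : ∀ a : ℚ_[p], ‖ψ a‖ = 1) (f : (Fin n → ℚ_[p]) → ℂ)
    (ξ : Fin n → ℚ_[p]) : ‖fourierQ μ ψ f ξ‖ ≤ ∫ x, ‖f x‖ ∂μ :=
  (norm_integral_le_integral_norm _).trans_eq (by simp_rw [norm_mul, hψnorm, one_mul])

theorem integrable_mul_fourierQ [SFinite μ] (hψcont : Continuous ψ)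
    (hψnorm : ∀ a : ℚ_[p], ‖ψ a‖ = 1) {m f : (Fin n → ℚ_[p]) → ℂ} (hm : Integrable m μ)
    (hf : Integrable f μ) : Integrable (fun ξ => m ξ * fourierQ μ ψ f ξ) μ :=
  hm.mul_bdd (aestronglyMeasurable_fourierQ μ hψcont hf.aestronglyMeasurable)
    (ae_of_all _ (norm_fourierQ_le μ hψnorm f))

theorem fourierQ_convolution [μ.IsAddHaarMeasure] (hψcont : Continuous ψ)
    (hψadd : ∀ a b : ℚ_[p], ψ (a + b) = ψ a * ψ b) (hψnorm : ∀ a : ℚ_[p], ‖ψ a‖ = 1)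
    {K f : (Fin n → ℚ_[p]) → ℂ} (hK : Integrable K μ) (hf : Integrable f μ)
    (ξ : Fin n → ℚ_[p]) :
    fourierQ μ ψ (fun x => ∫ y, K y * f (x - y) ∂μ) ξ
      = fourierQ μ ψ K ξ * fourierQ μ ψ f ξ := by
  have hχ : Continuous fun y => dotQ ξ y :=
    continuous_dotQ.comp (continuous_const.prodMk continuous_id)
  have htwist : ∀ x, ψ (dotQ ξ x) * ∫ y, K y * f (x - y) ∂μ
      = ∫ y, ψ (dotQ ξ y) * K y * (ψ (dotQ ξ (x - y)) * f (x - y)) ∂μ := fun x => by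
    rw [← integral_const_mul]
    congr 1 with y
    rw [← mul_mul_mul_comm, ← hψadd]
    simp only [dotQ_eq_dotProduct, ← dotProduct_add, add_sub_cancel]
  simpa [fourierQ, htwist, convolution_def] using
    integral_convolution (ContinuousLinearMap.mul ℂ ℂ) (integrable_char_mul hψcont hψnorm hχ hK)
      (integrable_char_mul hψcont hψnorm hχ hf)

end Fourier

noncomputable def invFourierQ (μ : Measure (Fin n → ℚ_[p])) (ψ : ℚ_[p] → ℂ)
    (m : (Fin n → ℚ_[p]) → ℂ) (x : Fin n → ℚ_[p]) : ℂ :=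
  ∫ ξ, ψ (-dotQ x ξ) * m ξ ∂μ

section InverseFourier

variable (μ : Measure (Fin n → ℚ_[p])) {ψ : ℚ_[p] → ℂ} {m : (Fin n → ℚ_[p]) → ℂ}

theorem invFourierQ_eq_zero_of_one_lt_norm [μ.IsAddLeftInvariant]
    (hψadd : ∀ a b : ℚ_[p], ψ (a + b) = ψ a * ψ b)
    (hψnontriv : ∃ a : ℚ_[p], ‖a‖ ≤ p ∧ ψ a ≠ 1)
    (hmi : ∀ e : Fin n → ℚ_[p], ‖e‖ ≤ 1 → ∀ ξ, m (e + ξ) = m ξ)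
    {x : Fin n → ℚ_[p]} (hx : 1 < ‖x‖) : invFourierQ μ ψ m x = 0 := by
  obtain ⟨e, he, hψe⟩ := exists_norm_le_one_char_dotQ_ne_one hψnontriv hx
  rw [invFourierQ, ← setIntegral_univ]
  refine setIntegral_eq_zero_of_add_left_eq_mul μ MeasurableSet.univ (e := -e) rfl hψe
    fun ξ _ => ?_
  rw [hmi _ (by rwa [norm_neg]) ξ, ← mul_assoc, ← hψadd]
  congr 2
  simp only [dotQ_eq_dotProduct, dotProduct_add, dotProduct_neg]
  ring

theorem norm_invFourierQ_le (hψnorm : ∀ a : ℚ_[p], ‖ψ a‖ = 1) (x : Fin n → ℚ_[p]) :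
    ‖invFourierQ μ ψ m x‖ ≤ ∫ ξ, ‖m ξ‖ ∂μ :=
  (norm_integral_le_integral_norm _).trans_eq (by simp_rw [norm_mul, hψnorm, one_mul])

theorem integrable_invFourierQ [μ.IsAddHaarMeasure] (hψcont : Continuous ψ)
    (hψadd : ∀ a b : ℚ_[p], ψ (a + b) = ψ a * ψ b) (hψnorm : ∀ a : ℚ_[p], ‖ψ a‖ = 1)
    (hψnontriv : ∃ a : ℚ_[p], ‖a‖ ≤ p ∧ ψ a ≠ 1) (hm : Integrable m μ)
    (hmi : ∀ e : Fin n → ℚ_[p], ‖e‖ ≤ 1 → ∀ ξ, m (e + ξ) = m ξ) :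
    Integrable (invFourierQ μ ψ m) μ := by
  have hmeas : AEStronglyMeasurable (invFourierQ μ ψ m) μ :=
    ((hψcont.comp continuous_dotQ.neg).aestronglyMeasurable.mul
      hm.aestronglyMeasurable.comp_snd).integral_prod_right'
  refine IntegrableOn.integrable_of_ae_notMem_eq_zero (s := closedBall 0 1)
    (Measure.integrableOn_of_bounded measure_closedBall_lt_top.ne hmeas
      (ae_of_all _ (norm_invFourierQ_le μ hψnorm))) (ae_of_all _ fun x hx => ?_)
  exact invFourierQ_eq_zero_of_one_lt_norm μ hψadd hψnontriv hmi (by simpa using hx)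

theorem fourierQ_invFourierQ [μ.IsAddHaarMeasure]
    (hμ : μ (closedBall (0 : Fin n → ℚ_[p]) 1) = 1) (hψcont : Continuous ψ)
    (hψadd : ∀ a b : ℚ_[p], ψ (a + b) = ψ a * ψ b) (hψnorm : ∀ a : ℚ_[p], ‖ψ a‖ = 1)
    (hψtriv : ∀ a : ℚ_[p], ‖a‖ ≤ 1 → ψ a = 1)
    (hψnontriv : ∃ a : ℚ_[p], ‖a‖ ≤ p ∧ ψ a ≠ 1) (hm : Integrable m μ)
    (hmi : ∀ e : Fin n → ℚ_[p], ‖e‖ ≤ 1 → ∀ ξ, m (e + ξ) = m ξ) (ξ : Fin n → ℚ_[p]) :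
    fourierQ μ ψ (invFourierQ μ ψ m) ξ = m ξ := by
  have hFubini : Integrable (Function.uncurry fun y η => ψ (dotQ (ξ - η) y) * m η)
      ((μ.restrict (closedBall 0 1)).prod μ) := by
    have : IsFiniteMeasure (μ.restrict (closedBall (0 : Fin n → ℚ_[p]) 1)) :=
      isFiniteMeasure_restrict.2 measure_closedBall_lt_top.ne
    simpa [Function.uncurry_def] using integrable_char_mul hψcont hψnorm
      (continuous_dotQ.comp ((continuous_const.sub continuous_snd).prodMk continuous_fst))
      ((integrable_const (1 : ℂ)).mul_prod hm)
  calc fourierQ μ ψ (invFourierQ μ ψ m) ξ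
      = ∫ y in closedBall 0 1, ∫ η, ψ (dotQ (ξ - η) y) * m η ∂μ ∂μ := by
        rw [fourierQ, ← setIntegral_eq_integral_of_forall_compl_eq_zero (s := closedBall 0 1)
          fun y hy => by rw [invFourierQ_eq_zero_of_one_lt_norm μ hψadd hψnontriv hmi
            (by simpa using hy), mul_zero]]
        refine setIntegral_congr_fun measurableSet_closedBall fun y _ => ?_
        rw [invFourierQ, ← integral_const_mul]
        congr 1 with η
        rw [← mul_assoc, ← hψadd]
        congr 2
        simp only [dotQ_eq_dotProduct, sub_dotProduct, dotProduct_comm y]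
        ring
    _ = ∫ η, (∫ y in closedBall 0 1, ψ (dotQ (ξ - η) y) ∂μ) * m η ∂μ := by
        rw [integral_integral_swap hFubini]
        simp_rw [integral_mul_const]
    _ = ∫ η in closedBall ξ 1, m ξ ∂μ := by
        rw [← integral_indicator measurableSet_closedBall]
        congr 1 with η
        rw [setIntegral_closedBall_char_dotQ μ hμ hψadd hψtriv hψnontriv, norm_sub_rev]
        by_cases hη : ‖η - ξ‖ ≤ 1
        · rw [if_pos hη, Set.indicator_of_mem (by rwa [mem_closedBall, dist_eq_norm]),
            one_mul, ← hmi _ hη ξ, sub_add_cancel]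
        · rw [if_neg hη, Set.indicator_of_notMem (by rwa [mem_closedBall, dist_eq_norm]),
            zero_mul]
    _ = m ξ := by simp [measureReal_def, Measure.addHaar_closedBall_center, hμ]

theorem integral_char_mul_fourierQ [μ.IsAddHaarMeasure] (hψcont : Continuous ψ)
    (hψadd : ∀ a b : ℚ_[p], ψ (a + b) = ψ a * ψ b) (hψnorm : ∀ a : ℚ_[p], ‖ψ a‖ = 1)
    {f : (Fin n → ℚ_[p]) → ℂ} (hm : Integrable m μ) (hf : Integrable f μ)
    (x : Fin n → ℚ_[p]) :
    ∫ ξ, ψ (-dotQ ξ x) * (m ξ * fourierQ μ ψ f ξ) ∂μ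
      = ∫ y, invFourierQ μ ψ m y * f (x - y) ∂μ := by
  have hFubini : Integrable (Function.uncurry fun ξ y => ψ (-dotQ (x - y) ξ) * (m ξ * f y))
      (μ.prod μ) :=
    integrable_char_mul hψcont hψnorm
      (continuous_dotQ.comp ((continuous_const.sub continuous_snd).prodMk continuous_fst)).neg
      (hm.mul_prod hf)
  calc ∫ ξ, ψ (-dotQ ξ x) * (m ξ * fourierQ μ ψ f ξ) ∂μ
      = ∫ ξ, ∫ y, ψ (-dotQ (x - y) ξ) * (m ξ * f y) ∂μ ∂μ := by
        congr 1 with ξ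
        rw [fourierQ, ← integral_const_mul, ← integral_const_mul]
        congr 1 with y
        rw [show -dotQ (x - y) ξ = -dotQ ξ x + dotQ ξ y by
          simp only [dotQ_eq_dotProduct, dotProduct_comm (x - y), dotProduct_sub]; ring, hψadd]
        ring
    _ = ∫ y, invFourierQ μ ψ m (x - y) * f y ∂μ := by
        rw [integral_integral_swap hFubini]
        simp_rw [← mul_assoc, integral_mul_const]
        rfl
    _ = ∫ y, invFourierQ μ ψ m y * f (x - y) ∂μ := by
        rw [← integral_sub_left_eq_self _ μ x]
        simp_rw [sub_sub_cancel]

end InverseFourier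

noncomputable def heatMultiplier (A : (Fin n → ℚ_[p]) → ℝ) (t : ℝ) :
    (Fin n → ℚ_[p]) → ℂ :=
  {ξ | 1 < ‖ξ‖}.indicator fun ξ => (Real.exp (-(t * A ξ)) : ℂ)

theorem measurableSet_one_lt_norm : MeasurableSet {ξ : Fin n → ℚ_[p] | 1 < ‖ξ‖} :=
  measurableSet_lt measurable_const continuous_norm.measurable

theorem heatK_eq_invFourierQ (μ : Measure (Fin n → ℚ_[p])) (ψ : ℚ_[p] → ℂ)
    (A : (Fin n → ℚ_[p]) → ℝ) (t : ℝ) :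
    heatK μ ψ A t = invFourierQ μ ψ (heatMultiplier A t) := by
  ext x
  rw [heatK, invFourierQ, ← integral_indicator measurableSet_one_lt_norm]
  simp_rw [heatMultiplier, Set.indicator_mul_right]

theorem heatT_of_ne_zero (μ : Measure (Fin n → ℚ_[p])) (ψ : ℚ_[p] → ℂ)
    (A : (Fin n → ℚ_[p]) → ℝ) {t : ℝ} (ht : t ≠ 0) (f : (Fin n → ℚ_[p]) → ℂ) :
    heatT μ ψ A t f = fun x => ∫ y, heatK μ ψ A t y * f (x - y) ∂μ := by
  ext x
  exact if_neg ht

theorem heatMultiplier_add {A : (Fin n → ℚ_[p]) → ℝ} {g : ℝ → ℝ} (hrad : ∀ ξ, A ξ = g ‖ξ‖)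
    (t : ℝ) {e : Fin n → ℚ_[p]} (he : ‖e‖ ≤ 1) (ξ : Fin n → ℚ_[p]) :
    heatMultiplier A t (e + ξ) = heatMultiplier A t ξ := by
  by_cases hξ : 1 < ‖ξ‖
  · have hnorm := IsUltrametricDist.norm_add_eq_right_of_norm_lt (he.trans_lt hξ)
    simp [heatMultiplier, Set.indicator, hξ, hnorm, hrad]
  · have hle : ‖e + ξ‖ ≤ 1 :=
      (IsUltrametricDist.norm_add_le_max _ _).trans (max_le he (not_lt.1 hξ))
    simp [heatMultiplier, hξ, hle.not_gt]

theorem integrable_heatMultiplier (μ : Measure (Fin n → ℚ_[p])) [μ.IsAddHaarMeasure]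
    {A : (Fin n → ℚ_[p]) → ℝ} (hA : Measurable A) {β C₀ : ℝ} (hβ : 0 < β) (hC₀ : 0 < C₀)
    (hlow : ∀ ξ, C₀ * ‖ξ‖ ^ β ≤ A ξ) {t : ℝ} (ht : 0 < t) :
    Integrable (heatMultiplier A t) μ := by
  have hp : (1 : ℝ) < p := by exact_mod_cast (Fact.out : p.Prime).one_lt
  obtain ⟨N, hN⟩ := exists_measureReal_sphere_pow_le μ
  have hbound : ∀ m : ℕ, ∀ ξ ∈ sphere (0 : Fin n → ℚ_[p]) ((p : ℝ) ^ m),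
      ‖Real.exp (-(t * A ξ))‖ ≤ Real.exp (-(t * C₀ * ((p : ℝ) ^ β) ^ m)) := fun m ξ hξ => by
    have hA := hlow ξ
    rw [mem_sphere_zero_iff_norm.1 hξ, ← Real.rpow_pow_comm (by positivity)] at hA
    rw [Real.norm_of_nonneg (Real.exp_nonneg _), Real.exp_le_exp, mul_assoc]
    exact neg_le_neg (mul_le_mul_of_nonneg_left hA ht.le)
  have hsphere : ∀ m : ℕ, μ (sphere (0 : Fin n → ℚ_[p]) ((p : ℝ) ^ m)) < ⊤ := fun m =>
    (measure_mono sphere_subset_closedBall).trans_lt measure_closedBall_lt_top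
  have hcover : {ξ : Fin n → ℚ_[p] | 1 < ‖ξ‖} ⊆ ⋃ m : ℕ, sphere 0 ((p : ℝ) ^ m) := fun ξ hξ =>
    Set.mem_iUnion.2 ((exists_norm_eq_pow_of_one_lt hξ).imp fun _ => mem_sphere_zero_iff_norm.2)
  have hsum : Summable fun m : ℕ =>
      ∫ ξ in sphere 0 ((p : ℝ) ^ m), ‖Real.exp (-(t * A ξ))‖ ∂μ := by
    refine .of_nonneg_of_le (fun m => integral_nonneg fun _ => norm_nonneg _) (fun m => ?_)
      ((Real.summable_exp_neg_mul_pow_mul_pow (mul_pos ht hC₀)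
        (Real.one_lt_rpow hp hβ) N).mul_right (μ.real (closedBall 0 1)))
    calc ∫ ξ in sphere 0 ((p : ℝ) ^ m), ‖Real.exp (-(t * A ξ))‖ ∂μ
        ≤ Real.exp (-(t * C₀ * ((p : ℝ) ^ β) ^ m)) * μ.real (sphere 0 ((p : ℝ) ^ m)) :=
          (Real.le_norm_self _).trans (norm_setIntegral_le_of_norm_le_const (hsphere m)
            fun ξ hξ => (norm_norm (Real.exp _)).trans_le (hbound m ξ hξ))
      _ ≤ Real.exp (-(t * C₀ * ((p : ℝ) ^ β) ^ m)) * (N ^ m * μ.real (closedBall 0 1)) := by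
          gcongr
          exact hN m
      _ = _ := by ring
  have hmeas : Measurable fun ξ => Real.exp (-(t * A ξ)) := by fun_prop
  rw [heatMultiplier, integrable_indicator_iff measurableSet_one_lt_norm]
  exact Integrable.ofReal ((integrableOn_iUnion_of_summable_integral_norm
    (fun m => Measure.integrableOn_of_bounded (hsphere m).ne hmeas.aestronglyMeasurable
      (ae_restrict_of_forall_mem isClosed_sphere.measurableSet (hbound m))) hsum).mono_set hcover)

theorem MemL20.integrable {μ : Measure (Fin n → ℚ_[p])} [IsFiniteMeasureOnCompacts μ]
    {f : (Fin n → ℚ_[p]) → ℂ} (hf : MemL20 μ f) : Integrable f μ := by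
  have : IsFiniteMeasure (μ.restrict (closedBall (0 : Fin n → ℚ_[p]) 1)) :=
    isFiniteMeasure_restrict.2 measure_closedBall_lt_top.ne
  refine IntegrableOn.integrable_of_ae_notMem_eq_zero (s := closedBall 0 1)
    ((hf.1.restrict _).integrable one_le_two) ?_
  filter_upwards [hf.2.1] with x hx hxB using hx (by simpa using hxB)

end PadicHeat

open PadicHeat

theorem fourier_transform_of_heat_semigroup_general {p n : ℕ} [Fact p.Prime]
    (μ : Measure (Fin n → ℚ_[p])) [μ.IsAddHaarMeasure]
    (hμ : μ (closedBall (0 : Fin n → ℚ_[p]) 1) = 1)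
    (β C₀ : ℝ) (hβ : 0 < β) (hC₀ : 0 < C₀)
    (A : (Fin n → ℚ_[p]) → ℝ) (g : ℝ → ℝ)
    (hrad : ∀ ξ : Fin n → ℚ_[p], A ξ = g ‖ξ‖)
    (hlow : ∀ ξ : Fin n → ℚ_[p], C₀ * ‖ξ‖ ^ β ≤ A ξ)
    (ψ : ℚ_[p] → ℂ) (hψcont : Continuous ψ)
    (hψadd : ∀ a b : ℚ_[p], ψ (a + b) = ψ a * ψ b)
    (hψnorm : ∀ a : ℚ_[p], ‖ψ a‖ = 1)
    (hψtriv : ∀ a : ℚ_[p], ‖a‖ ≤ 1 → ψ a = 1)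
    (hψnontriv : ∃ a : ℚ_[p], ‖a‖ ≤ p ∧ ψ a ≠ 1)
    (f : (Fin n → ℚ_[p]) → ℂ) (hf : MemL20 μ f)
    (t : ℝ) (ht : 0 < t) :
    Integrable f μ ∧
    (∀ ξ : Fin n → ℚ_[p],
      fourierQ μ ψ (heatT μ ψ A t f) ξ =
        Set.indicator {η : Fin n → ℚ_[p] | 1 < ‖η‖}
          (fun η => (Real.exp (-(t * A η)) : ℂ) * fourierQ μ ψ f η) ξ) ∧
    Integrable
      (fun ξ : Fin n → ℚ_[p] =>
        Set.indicator {η : Fin n → ℚ_[p] | 1 < ‖η‖}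
          (fun η => (Real.exp (-(t * A η)) : ℂ) * fourierQ μ ψ f η) ξ) μ ∧
    (∀ᵐ x ∂μ, heatT μ ψ A t f x =
      ∫ ξ, ψ (-dotQ ξ x) *
        Set.indicator {η : Fin n → ℚ_[p] | 1 < ‖η‖}
          (fun η => (Real.exp (-(t * A η)) : ℂ) * fourierQ μ ψ f η) ξ ∂μ) := by
  have hA : Measurable A := by
    rw [show A = _ from funext hrad]
    exact measurable_comp_norm g
  have hfi := hf.integrable
  have hm := integrable_heatMultiplier μ hA hβ hC₀ hlow ht
  have hmi : ∀ e : Fin n → ℚ_[p], ‖e‖ ≤ 1 → ∀ ξ,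
      heatMultiplier A t (e + ξ) = heatMultiplier A t ξ := fun _ he => heatMultiplier_add hrad t he
  have hT : heatT μ ψ A t f
      = fun x => ∫ y, invFourierQ μ ψ (heatMultiplier A t) y * f (x - y) ∂μ := by
    rw [heatT_of_ne_zero μ ψ A ht.ne', heatK_eq_invFourierQ]
  have hsymbol : ∀ ξ, {η : Fin n → ℚ_[p] | 1 < ‖η‖}.indicator
      (fun η => (Real.exp (-(t * A η)) : ℂ) * fourierQ μ ψ f η) ξ
        = heatMultiplier A t ξ * fourierQ μ ψ f ξ := fun ξ => Set.indicator_mul_left _ _ _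
  simp_rw [hsymbol, hT]
  refine ⟨hfi, fun ξ => ?_, integrable_mul_fourierQ μ hψcont hψnorm hm hfi,
    ae_of_all _ fun x => (integral_char_mul_fourierQ μ hψcont hψadd hψnorm hm hfi x).symm⟩
  rw [fourierQ_convolution μ hψcont hψadd hψnorm
      (integrable_invFourierQ μ hψcont hψadd hψnorm hψnontriv hm hmi) hfi,
    fourierQ_invFourierQ μ hμ hψcont hψadd hψnorm hψtriv hψnontriv hm hmi]

/-- For `f ∈ L²₀(ℤ_p^n)` (hence `f ∈ L¹`) and `t > 0`, the Fourier transform of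
`K(·,t) ∗ f` equals `1_{ℚ_p^n∖ℤ_p^n}(ξ) e^{−tA(ξ)} f̂(ξ)`, this function is integrable, and
`(T(t)f)(x) = ∫ ψ(−ξ·x) 1_{ℚ_p^n∖ℤ_p^n}(ξ) e^{−tA(ξ)} f̂(ξ) dⁿξ` for almost every `x`. -/
theorem fourier_transform_of_heat_semigroup {p n : ℕ} [Fact p.Prime] (hn : 0 < n)
    (μ : Measure (Fin n → ℚ_[p])) [μ.IsAddHaarMeasure]
    (hμ : μ (closedBall (0 : Fin n → ℚ_[p]) 1) = 1)
    (β C₀ C₁ : ℝ) (hβ : 0 < β) (hC₀ : 0 < C₀) (hC₁ : 0 < C₁)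
    (A : (Fin n → ℚ_[p]) → ℝ) (g : ℝ → ℝ)
    (hrad : ∀ ξ : Fin n → ℚ_[p], A ξ = g ‖ξ‖)
    (hlow : ∀ ξ : Fin n → ℚ_[p], C₀ * ‖ξ‖ ^ β ≤ A ξ)
    (hupp : ∀ ξ : Fin n → ℚ_[p], A ξ ≤ C₁ * ‖ξ‖ ^ β)
    (ψ : ℚ_[p] → ℂ) (hψcont : Continuous ψ)
    (hψadd : ∀ a b : ℚ_[p], ψ (a + b) = ψ a * ψ b)
    (hψnorm : ∀ a : ℚ_[p], ‖ψ a‖ = 1)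
    (hψtriv : ∀ a : ℚ_[p], ‖a‖ ≤ 1 → ψ a = 1)
    (hψnontriv : ∃ a : ℚ_[p], ‖a‖ ≤ p ∧ ψ a ≠ 1)
    (f : (Fin n → ℚ_[p]) → ℂ) (hf : MemL20 μ f)
    (t : ℝ) (ht : 0 < t) :
    Integrable f μ ∧
    (∀ ξ : Fin n → ℚ_[p],
      fourierQ μ ψ (heatT μ ψ A t f) ξ =
        Set.indicator {η : Fin n → ℚ_[p] | 1 < ‖η‖}
          (fun η => (Real.exp (-(t * A η)) : ℂ) * fourierQ μ ψ f η) ξ) ∧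
    Integrable
      (fun ξ : Fin n → ℚ_[p] =>
        Set.indicator {η : Fin n → ℚ_[p] | 1 < ‖η‖}
          (fun η => (Real.exp (-(t * A η)) : ℂ) * fourierQ μ ψ f η) ξ) μ ∧
    (∀ᵐ x ∂μ, heatT μ ψ A t f x =
      ∫ ξ, ψ (-dotQ ξ x) *
        Set.indicator {η : Fin n → ℚ_[p] | 1 < ‖η‖}
          (fun η => (Real.exp (-(t * A η)) : ℂ) * fourierQ μ ψ f η) ξ ∂μ) :=
  fourier_transform_of_heat_semigroup_general μ hμ β C₀ hβ hC₀ A g hrad hlow ψ hψcont hψadd hψnorm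
    hψtriv hψnontriv f hf t ht
end
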